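/- In the vector-commitment audit game, assume (i) S_a > ((1 − p_a)/p_a)·R_a + c_a/(ε·p_a), (ii) R_a > c_a/(1 − ε), and (iii) R_s > c_s. Let J be a nonempty set of SPs with |J| < N/2. Then the honest profile σ^h is |J|-strong with respect to J: for every joint deviation σ'_J of the members of J, there exists i ∈ J with u_i(σ'_J, σ^h_{−J}) ≤ u_i(σ^h); indeed, u_i(σ'_J, σ^h_{−J}) ≤ u_i(σ^h) holds for every i ∈ J. -/

import Mathlib

/-!
Vector-commitment audit game: as the on-chain-verified audit game, except that each
on-chain audit report includes a vector commitment binding the auditor to the audit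
responses it actually received. Hence a ✓ report by an auditor who did not perform the
audit can never be backed by a valid proof at inspection time, regardless of whether
the auditee stored.
-/

open Finset

/-- A pure strategy of storage provider `i`. -/
structure Strat (N : ℕ) (i : Fin N) where
  /-- whether `i` stores its assigned data -/
  s : Bool
  /-- whether `i` audits SP `j` (at cost `c_a`) -/
  a : {j : Fin N // j ≠ i} → Bool
  /-- `i`'s reporting policy about `j`, as a function of whether a valid proof was received -/
  ρ : {j : Fin N // j ≠ i} → Bool → Bool

/-- Numerical value of a Boolean choice. -/
def b01 (b : Bool) : ℝ := if b then 1 else 0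

/-- Expected audit payoff of the auditor from one ordered pair in the vector-commitment
game: if the auditor audits (`a = 1`), the payoff is as in the on-chain-verified game;
if the auditor does not audit (`a = 0`), a ✓ report is never backable, so it earns
`(1 − p_a)·R_a − p_a·S_a` regardless of the auditee's storage bit. -/
noncomputable def pairPayoffVC (Ra ca Sa pa ε : ℝ) (sj a : Bool) (ρ : Bool → Bool) : ℝ :=
  let β : ℝ := if sj then 1 - ε else 0
  let F : ℝ := (1 - pa) * Ra - pa * Sa
  if a then β * b01 (ρ true) * Ra + (1 - β) * b01 (ρ false) * F - ca
  else b01 (ρ false) * F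

/-- The deterministic report of `i` about `j`: `r_i^j = ρ_i^j (a_i^j · s_j)`. -/
def report {N : ℕ} (σ : ∀ i : Fin N, Strat N i) (i : Fin N) (j : {j : Fin N // j ≠ i}) : Bool :=
  (σ i).ρ j ((σ i).a j && (σ j.1).s)

/-- Number of SPs `j ≠ i` whose deterministic report about `i` is ✓. -/
def trueReports {N : ℕ} (σ : ∀ i : Fin N, Strat N i) (i : Fin N) : ℕ :=
  (univ.filter fun j : {j : Fin N // j ≠ i} => report σ j.1 ⟨i, Ne.symm j.2⟩ = true).card

/-- Total (expected) utility of SP `i` in the vector-commitment audit game. -/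
noncomputable def U {N : ℕ} (Rs Ra cs ca Sa pa ε : ℝ) (σ : ∀ i : Fin N, Strat N i)
    (i : Fin N) : ℝ :=
  Rs * (if (N : ℝ) / 2 < (trueReports σ i : ℝ) then 1 else 0)
    - cs * b01 (σ i).s
    + ∑ j : {j : Fin N // j ≠ i}, pairPayoffVC Ra ca Sa pa ε (σ j.1).s ((σ i).a j) ((σ i).ρ j)

/-- The honest strategy profile: store, audit everyone, report ✓ iff a valid proof
was received. -/
def honest (N : ℕ) : ∀ i : Fin N, Strat N i :=
  fun _ => ⟨true, fun _ => true, fun _ b => b⟩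

/-!
Condition (i) makes an unbacked ✓ report a loss in expectation, and condition (ii) makes an
honest audit profitable, so no choice of auditing or reporting earns more from a single pair
than the honest `(1 - ε)·R_a - c_a`. Storing is then dominant: an SP that does not store
receives a ✓ only from fellow deviators, fewer than `N/2` of them, so it forfeits `R_s > c_s`,
while the honest SP is backed by all `N - 1 ≥ N/2` others when `N ≥ 3`.
-/

open Finset

lemma b01_mem_Icc (b : Bool) : b01 b ∈ Set.Icc 0 1 := by
  cases b <;> simp [b01]

section PairPayoff

variable {Ra ca Sa pa ε : ℝ}

lemma forfeit_nonpos_of_slash_gt (hpa : 0 < pa) (hca : 0 ≤ ca) (hε : 0 ≤ ε)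
    (h1 : ((1 - pa) / pa) * Ra + ca / (ε * pa) < Sa) :
    (1 - pa) * Ra - pa * Sa ≤ 0 := by
  have hslash : (1 - pa) * Ra / pa ≤ Sa := by
    rw [div_mul_eq_mul_div] at h1
    linarith [div_nonneg hca (mul_nonneg hε hpa.le)]
  linarith [(div_le_iff₀ hpa).mp hslash]

lemma audit_cost_lt_of_reward_gt (hε : ε < 1) (h2 : ca / (1 - ε) < Ra) :
    ca < (1 - ε) * Ra := by
  linarith [(div_lt_iff₀ (sub_pos.mpr hε)).mp h2]

lemma pairPayoffVC_le (hε : 0 ≤ ε) (hca : 0 ≤ ca)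
    (hF : (1 - pa) * Ra - pa * Sa ≤ 0) (hP : ca ≤ (1 - ε) * Ra)
    (sj a : Bool) (ρ : Bool → Bool) :
    pairPayoffVC Ra ca Sa pa ε sj a ρ ≤ (1 - ε) * Ra - ca := by
  have ht := b01_mem_Icc (ρ true)
  have hf := b01_mem_Icc (ρ false)
  cases a <;> cases sj <;> simp only [pairPayoffVC, Bool.false_eq_true, if_true, if_false] <;>
    nlinarith [mul_nonneg (sub_nonneg.mpr ht.2) (hca.trans hP), mul_nonneg hε hf.1,
      mul_nonneg (mul_nonneg hε hf.1) (neg_nonneg.mpr hF), mul_nonneg hf.1 (neg_nonneg.mpr hF)]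

lemma pairPayoffVC_honest :
    pairPayoffVC Ra ca Sa pa ε true true id = (1 - ε) * Ra - ca := by
  simp [pairPayoffVC, b01]

end PairPayoff

section Profiles

variable {N : ℕ}

lemma card_subtype_ne (i : Fin N) : Fintype.card {j : Fin N // j ≠ i} = N - 1 := by
  simp [Fintype.card_subtype_compl]

lemma trueReports_honest (i : Fin N) : trueReports (honest N) i = N - 1 := by
  rw [trueReports, filter_true_of_mem fun j _ => by simp [report, honest], card_univ,
    card_subtype_ne]

lemma trueReports_le_card_of_not_stored (J : Finset (Fin N)) (σ : ∀ i : Fin N, Strat N i)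
    (hσ : ∀ i ∉ J, σ i = honest N i) (i : Fin N) (hs : (σ i).s = false) :
    trueReports σ i ≤ J.card := by
  refine card_le_card_of_injOn Subtype.val (fun j hj => ?_) Subtype.val_injective.injOn
  by_contra hjJ
  replace hj : report σ j.1 ⟨i, Ne.symm j.2⟩ = true := (mem_filter.mp hj).2
  rw [report, hσ j.1 hjJ] at hj
  simp [honest, hs] at hj

lemma sum_pairPayoffVC_le_honest {Ra ca Sa pa ε : ℝ} (hε : 0 ≤ ε) (hca : 0 ≤ ca)
    (hF : (1 - pa) * Ra - pa * Sa ≤ 0) (hP : ca ≤ (1 - ε) * Ra)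
    (σ : ∀ i : Fin N, Strat N i) (i : Fin N) :
    ∑ j : {j : Fin N // j ≠ i}, pairPayoffVC Ra ca Sa pa ε (σ j.1).s ((σ i).a j) ((σ i).ρ j)
      ≤ ∑ j : {j : Fin N // j ≠ i},
          pairPayoffVC Ra ca Sa pa ε (honest N j.1).s ((honest N i).a j) ((honest N i).ρ j) := by
  calc _ ≤ #(univ : Finset {j : Fin N // j ≠ i}) • ((1 - ε) * Ra - ca) :=
        sum_le_card_nsmul _ _ _ fun j _ => pairPayoffVC_le hε hca hF hP _ _ _
    _ = ∑ _j : {j : Fin N // j ≠ i}, ((1 - ε) * Ra - ca) := (sum_const _).symm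
    _ = _ := sum_congr rfl fun _ _ => pairPayoffVC_honest.symm

lemma half_lt_trueReports_honest (hN : 3 ≤ N) (i : Fin N) :
    (N : ℝ) / 2 < trueReports (honest N) i := by
  rw [trueReports_honest, Nat.cast_sub (by omega)]
  have : (3 : ℝ) ≤ N := by exact_mod_cast hN
  push_cast
  linarith

lemma U_le_U_honest {Rs Ra cs ca Sa pa ε : ℝ} (hN : 3 ≤ N) (hRs : 0 ≤ Rs) (hcs : cs ≤ Rs)
    (hε : 0 ≤ ε) (hca : 0 ≤ ca) (hF : (1 - pa) * Ra - pa * Sa ≤ 0) (hP : ca ≤ (1 - ε) * Ra)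
    (J : Finset (Fin N)) (hJ : (J.card : ℝ) ≤ N / 2)
    (σ : ∀ i : Fin N, Strat N i) (hσ : ∀ i ∉ J, σ i = honest N i) (i : Fin N) :
    U Rs Ra cs ca Sa pa ε σ i ≤ U Rs Ra cs ca Sa pa ε (honest N) i := by
  have haudit := sum_pairPayoffVC_le_honest hε hca hF hP σ i
  rw [U, U, if_pos (half_lt_trueReports_honest hN i), show (honest N i).s = true from rfl]
  cases hs : (σ i).s
  case false =>
    have hlost : ¬ (N : ℝ) / 2 < trueReports σ i :=
      not_lt.mpr ((Nat.cast_le.mpr (trueReports_le_card_of_not_stored J σ hσ i hs)).trans hJ)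
    simp only [if_neg hlost, b01, Bool.false_eq_true, if_true, if_false]
    linarith
  case true =>
    have hreward : Rs * (if (N : ℝ) / 2 < trueReports σ i then 1 else 0) ≤ Rs :=
      mul_le_of_le_one_right hRs (by split_ifs <;> norm_num)
    simp only [b01, if_true]
    linarith

end Profiles

theorem vc_honest_strong_equilibrium_general
    (N : ℕ) (hN : 3 ≤ N) (Rs Ra cs ca Sa pa ε : ℝ)
    (hRs : 0 < Rs) (hca : 0 < ca)
    (hpa0 : 0 < pa) (hε0 : 0 < ε) (hε1 : ε < 1)
    (h1 : ((1 - pa) / pa) * Ra + ca / (ε * pa) < Sa)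
    (h2 : ca / (1 - ε) < Ra)
    (h3 : cs < Rs)
    (J : Finset (Fin N)) (hJne : J.Nonempty) (hJ : (J.card : ℝ) < (N : ℝ) / 2)
    (σ : ∀ i : Fin N, Strat N i) (hσ : ∀ i ∉ J, σ i = honest N i) :
    (∃ i ∈ J, U Rs Ra cs ca Sa pa ε σ i ≤ U Rs Ra cs ca Sa pa ε (honest N) i) ∧
    ∀ i ∈ J, U Rs Ra cs ca Sa pa ε σ i ≤ U Rs Ra cs ca Sa pa ε (honest N) i := by
  have hF := forfeit_nonpos_of_slash_gt hpa0 hca.le hε0.le h1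
  have hP := (audit_cost_lt_of_reward_gt hε1 h2).le
  have hall : ∀ i ∈ J, U Rs Ra cs ca Sa pa ε σ i ≤ U Rs Ra cs ca Sa pa ε (honest N) i :=
    fun i _ => U_le_U_honest hN hRs.le h3.le hε0.le hca.le hF hP J hJ.le σ hσ i
  obtain ⟨i, hi⟩ := hJne
  exact ⟨⟨i, hi, hall i hi⟩, hall⟩

/-- In the vector-commitment audit game, under the strict conditions
(i) `S_a > ((1 − p_a)/p_a)·R_a + c_a/(ε·p_a)`, (ii) `R_a > c_a/(1 − ε)`, and
(iii) `R_s > c_s`, for any nonempty coalition `J` with `|J| < N/2`, the honest profile is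
`|J|`-strong with respect to `J`: for every joint deviation of the members of `J`
(non-members keep playing honestly), some member of `J` is weakly worse off; indeed every
member of `J` is weakly worse off. -/
theorem vc_honest_strong_equilibrium
    (N : ℕ) (hN : 3 ≤ N) (Rs Ra cs ca Sa pa ε : ℝ)
    (hRs : 0 < Rs) (hRa : 0 < Ra) (hcs : 0 < cs) (hca : 0 < ca) (hSa : 0 ≤ Sa)
    (hpa0 : 0 < pa) (hpa1 : pa ≤ 1) (hε0 : 0 < ε) (hε1 : ε < 1)
    (h1 : ((1 - pa) / pa) * Ra + ca / (ε * pa) < Sa)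
    (h2 : ca / (1 - ε) < Ra)
    (h3 : cs < Rs)
    (J : Finset (Fin N)) (hJne : J.Nonempty) (hJ : (J.card : ℝ) < (N : ℝ) / 2)
    (σ : ∀ i : Fin N, Strat N i) (hσ : ∀ i ∉ J, σ i = honest N i) :
    (∃ i ∈ J, U Rs Ra cs ca Sa pa ε σ i ≤ U Rs Ra cs ca Sa pa ε (honest N) i) ∧
    ∀ i ∈ J, U Rs Ra cs ca Sa pa ε σ i ≤ U Rs Ra cs ca Sa pa ε (honest N) i :=
  vc_honest_strong_equilibrium_general N hN Rs Ra cs ca Sa pa ε hRs hca hpa0 hε0 hε1 h1 h2 h3 J hJne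
    hJ σ hσ
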